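/- Let x ≥ e^{116} and set h = 11·x^{1/5}·log x. Then |S(x^{2/5}, √(2x))| < 0.0009·h. -/

import Mathlib

/-- `Sset x h M N` is the set `S(M,N)` of odd integers `u` with `M < u ≤ N` such that
`1 − h/u² ≤ {x/u²} < 1`, where `{θ}` denotes the fractional part. -/
def Sset (x h M N : ℝ) : Set ℤ :=
  {u : ℤ | Odd u ∧ M < (u : ℝ) ∧ (u : ℝ) ≤ N ∧
    1 - h / (u : ℝ) ^ 2 ≤ Int.fract (x / (u : ℝ) ^ 2) ∧ Int.fract (x / (u : ℝ) ^ 2) < 1}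

/-! For `u ∈ S(M, N)` the integer `m = ⌊x/u²⌋ + 1` satisfies `x < m u² ≤ x + h`. Two distinct
odd `u, v > M` with the same `m` would give `h > m |u² - v²| ≥ 2 (u + v) > 4M`, so `u ↦ m` is
injective once `h ≤ 4M`, and it takes values in `[1, (x + h)/M²]`. With `M = x^{2/5}` the bound
`(x + h)/M² = x^{1/5} + h/x^{4/5}` is at most `x^{1/5} + 1`, far below `0.0009 h` when
`log x ≥ 116`. -/

open Real Set

lemma lt_natFloor_add_one_mul {a b : ℝ} (hb : 0 < b) : a < (⌊a / b⌋₊ + 1) * b :=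
  (div_lt_iff₀ hb).mp (Nat.lt_floor_add_one _)

lemma natFloor_add_one_mul_le {a b h : ℝ} (ha : 0 ≤ a) (hb : 0 < b)
    (hfract : 1 - h / b ≤ Int.fract (a / b)) : (⌊a / b⌋₊ + 1) * b ≤ a + h := by
  rw [Int.fract, ← natCast_floor_eq_intCast_floor (by positivity)] at hfract
  calc (⌊a / b⌋₊ + 1) * b ≤ (a / b + h / b) * b := by gcongr ?_ * _; linarith
    _ = a + h := by field_simp

lemma Odd.le_of_mul_sq_lt_mul_sq_add {u v : ℤ} {m M h : ℝ} (hu : Odd u) (hv : Odd v)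
    (hM : 0 ≤ M) (hvM : M < v) (hm : 1 ≤ m) (hhM : h ≤ 4 * M)
    (huv : m * u ^ 2 < m * v ^ 2 + h) : u ≤ v := by
  by_contra! hvu
  have hgap : (v : ℝ) + 2 ≤ u := by
    obtain ⟨a, rfl⟩ := hu
    obtain ⟨b, rfl⟩ := hv
    exact_mod_cast (by omega : 2 * b + 1 + 2 ≤ 2 * a + 1)
  have hsq : h < (u : ℝ) ^ 2 - v ^ 2 := by nlinarith
  have hmsq : (u : ℝ) ^ 2 - v ^ 2 ≤ m * (u ^ 2 - v ^ 2) := le_mul_of_one_le_left (by nlinarith) hm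
  linarith

theorem ncard_Sset_le {x h M N : ℝ} (hx : 0 ≤ x) (hM : 0 < M) (hhM : h ≤ 4 * M) :
    (Sset x h M N).ncard ≤ ⌊(x + h) / M ^ 2⌋₊ := by
  set f : ℤ → ℕ := fun u => ⌊x / (u : ℝ) ^ 2⌋₊ + 1
  have hf : ∀ u, (1 : ℝ) ≤ f u := by simp [f]
  have hbounds : ∀ u ∈ Sset x h M N, x < f u * (u : ℝ) ^ 2 ∧ f u * (u : ℝ) ^ 2 ≤ x + h := by
    rintro u ⟨-, hMu, -, hfract, -⟩
    have hu : (0 : ℝ) < (u : ℝ) ^ 2 := by have := hM.trans hMu; positivity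
    simp only [f, Nat.cast_add, Nat.cast_one]
    exact ⟨lt_natFloor_add_one_mul hu, natFloor_add_one_mul_le hx hu hfract⟩
  have hle : ∀ u ∈ Sset x h M N, ∀ v ∈ Sset x h M N, f u = f v → u ≤ v := by
    intro u hu v hv huv
    refine hu.1.le_of_mul_sq_lt_mul_sq_add hv.1 hM.le hv.2.1 (hf u) hhM ?_
    have hv' := (hbounds v hv).1
    rw [← huv] at hv'
    linarith [(hbounds u hu).2]
  have hmaps : ∀ u ∈ Sset x h M N, f u ∈ Icc 1 ⌊(x + h) / M ^ 2⌋₊ := by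
    intro u hu
    refine ⟨by simp [f], Nat.le_floor ?_⟩
    rw [le_div_iff₀ (by positivity)]
    calc (f u : ℝ) * M ^ 2 ≤ f u * (u : ℝ) ^ 2 := by
          gcongr
          exact hu.2.1.le
      _ ≤ x + h := (hbounds u hu).2
  calc (Sset x h M N).ncard ≤ (Icc 1 ⌊(x + h) / M ^ 2⌋₊).ncard :=
        ncard_le_ncard_of_injOn f hmaps
          (fun u hu v hv huv => (hle u hu v hv huv).antisymm (hle v hv u hu huv.symm))
          (finite_Icc _ _)
    _ = ⌊(x + h) / M ^ 2⌋₊ := by simp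

lemma bounds_of_116_le_five_mul_log {t : ℝ} (ht : 0 < t) (hlog : 116 ≤ 5 * log t) :
    11 * t * (5 * log t) ≤ 4 * t ^ 2 ∧ 4 * t ^ 2 ≤ t ^ 4 ∧
      t + 1 < 0.0009 * (11 * t * (5 * log t)) := by
  set ℓ := log t
  have hℓ : ℓ ^ 3 / 6 ≤ t := by
    simpa [ℓ, Nat.factorial, exp_log ht] using pow_div_factorial_le_exp (x := ℓ) (by linarith) 3
  have hℓ_sq : 538 ≤ ℓ ^ 2 := by nlinarith
  have hℓt : 89 * ℓ ≤ t := by nlinarith [mul_le_mul_of_nonneg_left hℓ_sq (by linarith : 0 ≤ ℓ)]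
  have ht_large : 2000 ≤ t := by nlinarith
  refine ⟨?_, ?_, ?_⟩
  · nlinarith [mul_le_mul_of_nonneg_left (by linarith : 55 * ℓ ≤ 4 * t) ht.le]
  · nlinarith [mul_le_mul_of_nonneg_left (by nlinarith : 4 ≤ t ^ 2) (sq_nonneg t)]
  · nlinarith

/-- The bound (6.3): `|S(x^{2/5}, √(2x))| < 0.0009·h` for `h = 11·x^{1/5}·log x`
and `x ≥ e^{116}`. -/
theorem card_Sset_large_range (x : ℝ) (hx : Real.exp 116 ≤ x) :
    ((Sset x (11 * x ^ ((1 : ℝ) / 5) * Real.log x)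
        (x ^ ((2 : ℝ) / 5)) (Real.sqrt (2 * x))).ncard : ℝ) <
      0.0009 * (11 * x ^ ((1 : ℝ) / 5) * Real.log x) := by
  have hx0 : 0 < x := (exp_pos 116).trans_le hx
  have hlog : 116 ≤ log x := (le_log_iff_exp_le hx0).mpr hx
  set t := x ^ ((1 : ℝ) / 5)
  have ht : 0 < t := rpow_pos_of_pos hx0 _
  have hx5 : x = t ^ 5 := by
    rw [← rpow_natCast, ← rpow_mul hx0.le]; norm_num
  have ht2 : x ^ ((2 : ℝ) / 5) = t ^ 2 := by
    rw [← rpow_natCast, ← rpow_mul hx0.le]; norm_num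
  rw [ht2]
  rw [hx5, log_pow, Nat.cast_ofNat] at hlog ⊢
  obtain ⟨hhM, ht4, hfinal⟩ := bounds_of_116_le_five_mul_log ht hlog
  calc _ ≤ (⌊(t ^ 5 + 11 * t * (5 * log t)) / (t ^ 2) ^ 2⌋₊ : ℝ) := by
        exact_mod_cast ncard_Sset_le (by positivity) (by positivity) hhM
    _ ≤ (t ^ 5 + 11 * t * (5 * log t)) / (t ^ 2) ^ 2 :=
        Nat.floor_le (div_nonneg (by nlinarith) (by positivity))
    _ ≤ t + 1 := by rw [div_le_iff₀ (by positivity)]; nlinarith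
    _ < _ := hfinal
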